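/- arXiv:2010.08820 — 2 statements merged into one kernel-verified Lean document; each statement's English description precedes it below -/
import Mathlib

section
/- Let M be an invertible 2×2 real matrix with inverse entries (M⁻¹)_{11} = m₁₁, (M⁻¹)_{12} = m₁₂, (M⁻¹)_{21} = m₂₁, (M⁻¹)_{22} = m₂₂, and let θ be a real random variable with Gaussian distribution of mean μ and variance v > 0. Then the entries of the matrix E[(T_θ M T_θᵀ)⁻¹] are: entry (1,1) equals (m₁₁(1 + cos(2μ)e^{-2v}) + m₂₂(1 - cos(2μ)e^{-2v}) - (m₁₂ + m₂₁) sin(2μ)e^{-2v})/2; entry (1,2) equals (m₁₂(1 + cos(2μ)e^{-2v}) - m₂₁(1 - cos(2μ)e^{-2v}) + (m₁₁ - m₂₂) sin(2μ)e^{-2v})/2; entry (2,1) equals (m₂₁(1 + cos(2μ)e^{-2v}) - m₁₂(1 - cos(2μ)e^{-2v}) + (m₁₁ - m₂₂) sin(2μ)e^{-2v})/2; entry (2,2) equals (m₂₂(1 + cos(2μ)e^{-2v}) + m₁₁(1 - cos(2μ)e^{-2v}) + (m₁₂ + m₂₁) sin(2μ)e^{-2v})/2. -/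
/-!
Since `T_θ` is orthogonal, `(T_θ M T_θᵀ)⁻¹ = T_θ M⁻¹ T_θᵀ`, and by the double-angle formulas every
entry of `T_θ A T_θᵀ` has the form `a + b cos 2θ + c sin 2θ`. For `θ ~ N(μ, v)` the expectations
of `cos 2θ` and `sin 2θ` are the real and imaginary parts of the characteristic function at `2`,
`exp (2μi - 2v)`.
-/

open MeasureTheory ProbabilityTheory Real NNReal Matrix

/-- The 2×2 rotation matrix by angle `θ`. -/
noncomputable def rotMat (θ : ℝ) : Matrix (Fin 2) (Fin 2) ℝ :=
  !![Real.cos θ, -Real.sin θ; Real.sin θ, Real.cos θ]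

section Trigonometric

variable {ν : Measure ℝ} [IsFiniteMeasure ν]

lemma integrable_cos_mul (t : ℝ) : Integrable (fun x => cos (t * x)) ν :=
  .of_bound (by fun_prop) 1 (.of_forall fun x => by simpa using abs_cos_le_one (t * x))

lemma integrable_sin_mul (t : ℝ) : Integrable (fun x => sin (t * x)) ν :=
  .of_bound (by fun_prop) 1 (.of_forall fun x => by simpa using abs_sin_le_one (t * x))

lemma integrable_cexp_mul_I (t : ℝ) :
    Integrable (fun x : ℝ => Complex.exp (t * x * Complex.I)) ν :=
  .of_bound (by fun_prop) 1 (.of_forall fun x => by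
    rw [← Complex.ofReal_mul]; exact (Complex.norm_exp_ofReal_mul_I _).le)

lemma integral_cos_mul_eq_re_charFun (t : ℝ) : ∫ x, cos (t * x) ∂ν = (charFun ν t).re := by
  rw [charFun_apply_real, ← Complex.reCLM_apply,
    ← Complex.reCLM.integral_comp_comm (integrable_cexp_mul_I t)]
  simp_rw [Complex.reCLM_apply, ← Complex.ofReal_mul, Complex.exp_ofReal_mul_I_re]

lemma integral_sin_mul_eq_im_charFun (t : ℝ) : ∫ x, sin (t * x) ∂ν = (charFun ν t).im := by
  rw [charFun_apply_real, ← Complex.imCLM_apply,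
    ← Complex.imCLM.integral_comp_comm (integrable_cexp_mul_I t)]
  simp_rw [Complex.imCLM_apply, ← Complex.ofReal_mul, Complex.exp_ofReal_mul_I_im]

end Trigonometric

lemma integral_add_mul_cos_add_mul_sin {ν : Measure ℝ} [IsProbabilityMeasure ν] (a b c t : ℝ) :
    ∫ x, (a + b * cos (t * x) + c * sin (t * x)) ∂ν
      = a + b * (charFun ν t).re + c * (charFun ν t).im := by
  rw [integral_add (f := fun x => a + b * cos (t * x))
      ((integrable_const a).add ((integrable_cos_mul t).const_mul b))
      ((integrable_sin_mul t).const_mul c),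
    integral_add (integrable_const a) ((integrable_cos_mul t).const_mul b),
    integral_const_mul, integral_const_mul, integral_cos_mul_eq_re_charFun,
    integral_sin_mul_eq_im_charFun]
  simp

lemma charFun_gaussianReal' (μ : ℝ) (v : ℝ≥0) (t : ℝ) :
    charFun (gaussianReal μ v) t
      = ↑(exp (-(v * t ^ 2 / 2))) * Complex.exp (↑(t * μ) * Complex.I) := by
  rw [charFun_gaussianReal, Complex.ofReal_exp, ← Complex.exp_add]
  push_cast
  ring_nf

lemma re_charFun_gaussianReal (μ : ℝ) (v : ℝ≥0) (t : ℝ) :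
    (charFun (gaussianReal μ v) t).re = cos (t * μ) * exp (-(v * t ^ 2 / 2)) := by
  rw [charFun_gaussianReal', Complex.re_ofReal_mul, Complex.exp_ofReal_mul_I_re, mul_comm]

lemma im_charFun_gaussianReal (μ : ℝ) (v : ℝ≥0) (t : ℝ) :
    (charFun (gaussianReal μ v) t).im = sin (t * μ) * exp (-(v * t ^ 2 / 2)) := by
  rw [charFun_gaussianReal', Complex.im_ofReal_mul, Complex.exp_ofReal_mul_I_im, mul_comm]

lemma Matrix.inv_mul_mul_transpose_of_mul_transpose_eq_one {n R : Type*} [Fintype n]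
    [DecidableEq n] [CommRing R] {U : Matrix n n R} (hU : U * Uᵀ = 1) (A : Matrix n n R) :
    (U * A * Uᵀ)⁻¹ = U * A⁻¹ * Uᵀ := by
  rw [Matrix.mul_inv_rev, Matrix.mul_inv_rev, inv_eq_left_inv hU, inv_eq_right_inv hU, mul_assoc]

lemma rotMat_mul_transpose (θ : ℝ) : rotMat θ * (rotMat θ)ᵀ = 1 := by
  ext i j
  fin_cases i <;> fin_cases j <;> simp [rotMat, mul_apply, ← sq, mul_comm]

lemma rotMat_mul_mul_transpose (A : Matrix (Fin 2) (Fin 2) ℝ) (θ : ℝ) :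
    rotMat θ * A * (rotMat θ)ᵀ =
      !![(A 0 0 + A 1 1) / 2 + (A 0 0 - A 1 1) / 2 * cos (2 * θ)
            + -(A 0 1 + A 1 0) / 2 * sin (2 * θ),
         (A 0 1 - A 1 0) / 2 + (A 0 1 + A 1 0) / 2 * cos (2 * θ)
            + (A 0 0 - A 1 1) / 2 * sin (2 * θ);
         (A 1 0 - A 0 1) / 2 + (A 0 1 + A 1 0) / 2 * cos (2 * θ)
            + (A 0 0 - A 1 1) / 2 * sin (2 * θ),
         (A 0 0 + A 1 1) / 2 + (A 1 1 - A 0 0) / 2 * cos (2 * θ)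
            + (A 0 1 + A 1 0) / 2 * sin (2 * θ)] := by
  ext i j
  fin_cases i <;> fin_cases j <;>
    simp only [rotMat, cons_mul, empty_mul, Equiv.symm_apply_apply, Fin.isValue, Fin.zero_eta,
      Fin.mk_one, mul_apply, of_apply, cons_val', vecMul, dotProduct, Fin.sum_univ_two,
      cons_val_zero, cons_val_one, cons_val_fin_one, transpose_apply, cos_two_mul, sin_two_mul] <;>
    ring_nf <;> simp only [cos_sq'] <;> ring

theorem gaussian_expectation_rot_congruence_inv_entries_general
    (M : Matrix (Fin 2) (Fin 2) ℝ)
    (μ : ℝ) (v : ℝ≥0)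
    (m11 m12 m21 m22 : ℝ)
    (h11 : M⁻¹ 0 0 = m11) (h12 : M⁻¹ 0 1 = m12)
    (h21 : M⁻¹ 1 0 = m21) (h22 : M⁻¹ 1 1 = m22) :
    (∫ θ, (rotMat θ * M * (rotMat θ)ᵀ)⁻¹ 0 0 ∂(gaussianReal μ v)
        = (m11 * (1 + Real.cos (2 * μ) * Real.exp (-2 * (v : ℝ)))
            + m22 * (1 - Real.cos (2 * μ) * Real.exp (-2 * (v : ℝ)))
            - (m12 + m21) * (Real.sin (2 * μ) * Real.exp (-2 * (v : ℝ)))) / 2) ∧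
    (∫ θ, (rotMat θ * M * (rotMat θ)ᵀ)⁻¹ 0 1 ∂(gaussianReal μ v)
        = (m12 * (1 + Real.cos (2 * μ) * Real.exp (-2 * (v : ℝ)))
            - m21 * (1 - Real.cos (2 * μ) * Real.exp (-2 * (v : ℝ)))
            + (m11 - m22) * (Real.sin (2 * μ) * Real.exp (-2 * (v : ℝ)))) / 2) ∧
    (∫ θ, (rotMat θ * M * (rotMat θ)ᵀ)⁻¹ 1 0 ∂(gaussianReal μ v)
        = (m21 * (1 + Real.cos (2 * μ) * Real.exp (-2 * (v : ℝ)))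
            - m12 * (1 - Real.cos (2 * μ) * Real.exp (-2 * (v : ℝ)))
            + (m11 - m22) * (Real.sin (2 * μ) * Real.exp (-2 * (v : ℝ)))) / 2) ∧
    (∫ θ, (rotMat θ * M * (rotMat θ)ᵀ)⁻¹ 1 1 ∂(gaussianReal μ v)
        = (m22 * (1 + Real.cos (2 * μ) * Real.exp (-2 * (v : ℝ)))
            + m11 * (1 - Real.cos (2 * μ) * Real.exp (-2 * (v : ℝ)))
            + (m12 + m21) * (Real.sin (2 * μ) * Real.exp (-2 * (v : ℝ)))) / 2) := by
  have hE (a b c : ℝ) : ∫ θ, (a + b * cos (2 * θ) + c * sin (2 * θ)) ∂(gaussianReal μ v)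
      = a + b * (cos (2 * μ) * exp (-2 * v)) + c * (sin (2 * μ) * exp (-2 * v)) := by
    rw [integral_add_mul_cos_add_mul_sin, re_charFun_gaussianReal, im_charFun_gaussianReal]
    ring_nf
  simp_rw [inv_mul_mul_transpose_of_mul_transpose_eq_one (rotMat_mul_transpose _)]
  simp only [rotMat_mul_mul_transpose, h11, h12, h21, h22, of_apply, cons_val', cons_val_zero,
    cons_val_one, empty_val', cons_val_fin_one, hE]
  exact ⟨by ring, by ring, by ring, by ring⟩

theorem gaussian_expectation_rot_congruence_inv_entries
    (M : Matrix (Fin 2) (Fin 2) ℝ) (hM : IsUnit M.det)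
    (μ : ℝ) (v : ℝ≥0) (hv : 0 < v)
    (m11 m12 m21 m22 : ℝ)
    (h11 : M⁻¹ 0 0 = m11) (h12 : M⁻¹ 0 1 = m12)
    (h21 : M⁻¹ 1 0 = m21) (h22 : M⁻¹ 1 1 = m22) :
    (∫ θ, (rotMat θ * M * (rotMat θ)ᵀ)⁻¹ 0 0 ∂(gaussianReal μ v)
        = (m11 * (1 + Real.cos (2 * μ) * Real.exp (-2 * (v : ℝ)))
            + m22 * (1 - Real.cos (2 * μ) * Real.exp (-2 * (v : ℝ)))
            - (m12 + m21) * (Real.sin (2 * μ) * Real.exp (-2 * (v : ℝ)))) / 2) ∧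
    (∫ θ, (rotMat θ * M * (rotMat θ)ᵀ)⁻¹ 0 1 ∂(gaussianReal μ v)
        = (m12 * (1 + Real.cos (2 * μ) * Real.exp (-2 * (v : ℝ)))
            - m21 * (1 - Real.cos (2 * μ) * Real.exp (-2 * (v : ℝ)))
            + (m11 - m22) * (Real.sin (2 * μ) * Real.exp (-2 * (v : ℝ)))) / 2) ∧
    (∫ θ, (rotMat θ * M * (rotMat θ)ᵀ)⁻¹ 1 0 ∂(gaussianReal μ v)
        = (m21 * (1 + Real.cos (2 * μ) * Real.exp (-2 * (v : ℝ)))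
            - m12 * (1 - Real.cos (2 * μ) * Real.exp (-2 * (v : ℝ)))
            + (m11 - m22) * (Real.sin (2 * μ) * Real.exp (-2 * (v : ℝ)))) / 2) ∧
    (∫ θ, (rotMat θ * M * (rotMat θ)ᵀ)⁻¹ 1 1 ∂(gaussianReal μ v)
        = (m22 * (1 + Real.cos (2 * μ) * Real.exp (-2 * (v : ℝ)))
            + m11 * (1 - Real.cos (2 * μ) * Real.exp (-2 * (v : ℝ)))
            + (m12 + m21) * (Real.sin (2 * μ) * Real.exp (-2 * (v : ℝ)))) / 2) :=
  gaussian_expectation_rot_congruence_inv_entries_general M μ v m11 m12 m21 m22 h11 h12 h21 h22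
end

section
/- If θ is a real random variable with Gaussian distribution of mean μ and variance v ≥ 0, then E[sin²(θ)] = (1 − cos(2μ)e^{-2v})/2. -/
open MeasureTheory ProbabilityTheory Real NNReal ENNReal

lemma integral_gaussianReal_eq (μ : ℝ) {v : ℝ≥0} (hv : v ≠ 0) (g : ℝ → ℝ) :
    ∫ x, g x ∂(gaussianReal μ v) = ∫ x, g x * gaussianPDFReal μ v x := by
  rw [gaussianReal_of_var_ne_zero _ hv]
  have h : gaussianPDF μ v = fun x => ((gaussianPDFReal μ v x).toNNReal : ℝ≥0∞) := rfl
  rw [h, integral_withDensity_eq_integral_smul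
    ((measurable_gaussianPDFReal μ v).real_toNNReal) g]
  congr 1; ext x
  rw [NNReal.smul_def, smul_eq_mul, Real.coe_toNNReal _ (gaussianPDFReal_nonneg μ v x), mul_comm]

lemma integral_cos_two_mul_gaussianReal (μ : ℝ) (v : ℝ≥0) :
    ∫ x, Real.cos (2 * x) ∂(gaussianReal μ v)
      = Real.cos (2 * μ) * Real.exp (-2 * (v : ℝ)) := by
  by_cases hv : v = 0
  · subst hv
    simp [MeasureTheory.integral_dirac]
  · have hv0 : (0 : ℝ) < (v : ℝ) := by positivity
    have hvC : ((v : ℝ) : ℂ) ≠ 0 := by exact_mod_cast hv0.ne'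
    set b : ℂ := ((-(2 * (v : ℝ))⁻¹ : ℝ) : ℂ) with hb_def
    set c : ℂ := 2 * Complex.I + ((μ / v : ℝ) : ℂ) with hc_def
    set d : ℂ := ((-(μ ^ 2) / (2 * v) : ℝ) : ℂ) with hd_def
    have hb : b.re < 0 := by
      simp only [hb_def, Complex.ofReal_re]
      have : (0:ℝ) < (2 * (v:ℝ))⁻¹ := by positivity
      linarith
    have hbC : b = -(1 / (2 * ((v:ℝ):ℂ))) := by
      simp [hb_def]
    have key : ∀ x : ℝ, Real.cos (2 * x) * gaussianPDFReal μ v x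
        = (√(2 * π * v))⁻¹ * (Complex.exp (b * x ^ 2 + c * x + d)).re := by
      intro x
      have hz : b * x ^ 2 + c * x + d
          = ((-(2 * (v:ℝ))⁻¹ * x ^ 2 + (μ / v) * x + (-(μ ^ 2) / (2 * v)) : ℝ) : ℂ)
            + ((2 * x : ℝ) : ℂ) * Complex.I := by
        rw [hb_def, hc_def, hd_def]
        push_cast
        ring
      have hre : (b * x ^ 2 + c * x + d).re
          = -(2 * (v:ℝ))⁻¹ * x ^ 2 + (μ / v) * x + (-(μ ^ 2) / (2 * v)) := by
        rw [hz]
        simp only [Complex.add_re, Complex.ofReal_re, Complex.mul_I_re, Complex.ofReal_im,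
          neg_zero, add_zero]
      have him : (b * x ^ 2 + c * x + d).im = 2 * x := by
        rw [hz]
        simp only [Complex.add_im, Complex.ofReal_im, Complex.mul_I_im, Complex.ofReal_re,
          zero_add]
      rw [Complex.exp_re, hre, him, gaussianPDFReal]
      have : -(2 * (v:ℝ))⁻¹ * x ^ 2 + (μ / v) * x + (-(μ ^ 2) / (2 * v))
          = -(x - μ) ^ 2 / (2 * v) := by
        field_simp
        ring
      rw [this]
      ring
    rw [integral_gaussianReal_eq μ hv]
    simp_rw [key]
    have hintre : ∫ a : ℝ, (Complex.exp (b * a ^ 2 + c * a + d)).re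
        = (∫ a : ℝ, Complex.exp (b * a ^ 2 + c * a + d)).re := by
      simpa using integral_re (integrable_cexp_quadratic' hb c d)
    rw [integral_const_mul, hintre, integral_cexp_quadratic hb c d]
    have hpib : (π : ℂ) / -b = ((2 * π * v : ℝ) : ℂ) := by
      rw [hbC]
      push_cast
      field_simp
    have hpow : ((π : ℂ) / -b) ^ (1 / 2 : ℂ) = ((√(2 * π * v) : ℝ) : ℂ) := by
      rw [hpib]
      have h2 : ((1 / 2 : ℝ) : ℂ) = (1 / 2 : ℂ) := by norm_num
      rw [← h2, ← Complex.ofReal_cpow (by positivity)]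
      norm_num [Real.sqrt_eq_rpow]
    have hexp : d - c ^ 2 / (4 * b) = ((-2 * (v:ℝ) : ℝ) : ℂ) + ((2 * μ : ℝ) : ℂ) * Complex.I := by
      have hb' : b ≠ 0 := by
        intro h
        rw [h] at hb
        simp at hb
      rw [hbC, hc_def, hd_def]
      push_cast
      field_simp
      ring_nf
      rw [Complex.I_sq]
      ring
    rw [hpow, hexp]
    have hre2 : (((√(2 * π * v) : ℝ) : ℂ) *
        Complex.exp (((-2 * (v:ℝ) : ℝ) : ℂ) + ((2 * μ : ℝ) : ℂ) * Complex.I)).re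
        = √(2 * π * v) * (Real.exp (-2 * v) * Real.cos (2 * μ)) := by
      rw [Complex.re_ofReal_mul, Complex.exp_re]
      simp
    rw [hre2]
    have hs : √(2 * π * v) ≠ 0 := by positivity
    field_simp

theorem gaussian_expectation_sin_sq
    (μ : ℝ) (v : ℝ≥0) :
    ∫ θ, (Real.sin θ) ^ 2 ∂(gaussianReal μ v)
      = (1 - Real.cos (2 * μ) * Real.exp (-2 * (v : ℝ))) / 2 := by
  have hint : Integrable (fun θ : ℝ => Real.cos (2 * θ)) (gaussianReal μ v) := by
    refine Integrable.mono' (integrable_const 1) ?_ ?_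
    · exact (Real.continuous_cos.comp (continuous_const.mul continuous_id)).aestronglyMeasurable
    · filter_upwards with θ
      simpa using Real.abs_cos_le_one (2 * θ)
  have h : ∀ θ : ℝ, Real.sin θ ^ 2 = 1 / 2 - Real.cos (2 * θ) / 2 := fun θ =>
    Real.sin_sq_eq_half_sub θ
  simp_rw [h]
  rw [integral_sub (integrable_const _) (hint.div_const 2)]
  simp only [integral_div]
  rw [integral_cos_two_mul_gaussianReal, integral_const]
  simp
  ring
end
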